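/- Let Γ₀ be the subgroup of the group of bijections of ℝ³ generated by the five involutions P₁₂(x,y,z) = (y,x,z), P₂₃(x,y,z) = (x,z,y), σ₁(x,y,z) = (x,−y,−z), σ₂(x,y,z) = (−x,y,−z), and Q(x,y,z) = (x, y, x·y − z). Suppose u ∈ ℝ³ satisfies κ(u) > 2, where κ(x,y,z) = x² + y² + z² − x·y·z − 2. Then there exists γ ∈ Γ₀ such that, writing γ(u) = (x̃, ỹ, z̃), either (x̃ ≤ −2 and ỹ ≤ −2 and z̃ ≤ −2), or −2 ≤ x̃ ≤ 2. -/
import Mathlib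


/-- `κ(x,y,z) = x² + y² + z² − xyz − 2`, as a function on `ℝ × ℝ × ℝ`. -/
def kappaFun : ℝ × ℝ × ℝ → ℝ :=
  fun p => p.1 ^ 2 + p.2.1 ^ 2 + p.2.2 ^ 2 - p.1 * p.2.1 * p.2.2 - 2

/-- The transposition `(x,y,z) ↦ (y,x,z)`. -/
def permP12 : Equiv.Perm (ℝ × ℝ × ℝ) :=
  Function.Involutive.toPerm (fun p => (p.2.1, p.1, p.2.2)) (by rintro ⟨x, y, z⟩; rfl)

/-- The transposition `(x,y,z) ↦ (x,z,y)`. -/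
def permP23 : Equiv.Perm (ℝ × ℝ × ℝ) :=
  Function.Involutive.toPerm (fun p => (p.1, p.2.2, p.2.1)) (by rintro ⟨x, y, z⟩; rfl)

/-- The sign change `(x,y,z) ↦ (x,−y,−z)`. -/
def permSigma1 : Equiv.Perm (ℝ × ℝ × ℝ) :=
  Function.Involutive.toPerm (fun p => (p.1, -p.2.1, -p.2.2))
    (by rintro ⟨x, y, z⟩; simp)

/-- The sign change `(x,y,z) ↦ (−x,y,−z)`. -/
def permSigma2 : Equiv.Perm (ℝ × ℝ × ℝ) :=
  Function.Involutive.toPerm (fun p => (-p.1, p.2.1, -p.2.2))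
    (by rintro ⟨x, y, z⟩; simp)

/-- The quadratic reflection `(x,y,z) ↦ (x, y, xy − z)`. -/
def permQ : Equiv.Perm (ℝ × ℝ × ℝ) :=
  Function.Involutive.toPerm (fun p => (p.1, p.2.1, p.1 * p.2.1 - p.2.2))
    (by rintro ⟨x, y, z⟩; show (x, y, x * y - (x * y - z)) = (x, y, z); norm_num)

/-- The group `Γ₀` generated by the five involutions above. -/
def Gamma0 : Subgroup (Equiv.Perm (ℝ × ℝ × ℝ)) :=
  Subgroup.closure {permP12, permP23, permSigma1, permSigma2, permQ}

namespace GammaRed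

lemma memP12 : permP12 ∈ Gamma0 := Subgroup.subset_closure (by simp)
lemma memP23 : permP23 ∈ Gamma0 := Subgroup.subset_closure (by simp)
lemma memS1 : permSigma1 ∈ Gamma0 := Subgroup.subset_closure (by simp)
lemma memS2 : permSigma2 ∈ Gamma0 := Subgroup.subset_closure (by simp)
lemma memQ : permQ ∈ Gamma0 := Subgroup.subset_closure (by simp)

lemma P12_apply (v : ℝ×ℝ×ℝ) : permP12 v = (v.2.1, v.1, v.2.2) := rfl
lemma P23_apply (v : ℝ×ℝ×ℝ) : permP23 v = (v.1, v.2.2, v.2.1) := rfl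
lemma S1_apply (v : ℝ×ℝ×ℝ) : permSigma1 v = (v.1, -v.2.1, -v.2.2) := rfl
lemma S2_apply (v : ℝ×ℝ×ℝ) : permSigma2 v = (-v.1, v.2.1, -v.2.2) := rfl
lemma Q_apply (v : ℝ×ℝ×ℝ) : permQ v = (v.1, v.2.1, v.1 * v.2.1 - v.2.2) := rfl

def Good (v : ℝ × ℝ × ℝ) : Prop :=
  (v.1 ≤ -2 ∧ v.2.1 ≤ -2 ∧ v.2.2 ≤ -2) ∨ (-2 ≤ v.1 ∧ v.1 ≤ 2)

def Goal (v : ℝ × ℝ × ℝ) : Prop := ∃ γ ∈ Gamma0, Good (γ v)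

lemma pull {g : Equiv.Perm (ℝ×ℝ×ℝ)} (hg : g ∈ Gamma0) {v : ℝ×ℝ×ℝ}
    (h : Goal (g v)) : Goal v := by
  obtain ⟨γ, hγ, hG⟩ := h
  exact ⟨γ * g, mul_mem hγ hg, by simpa [Equiv.Perm.mul_apply] using hG⟩

lemma caseA1 {v : ℝ×ℝ×ℝ} (h1 : -2 ≤ v.1) (h2 : v.1 ≤ 2) : Goal v :=
  ⟨1, one_mem _, Or.inr ⟨h1, h2⟩⟩

lemma caseA2 {v : ℝ×ℝ×ℝ} (h1 : -2 ≤ v.2.1) (h2 : v.2.1 ≤ 2) : Goal v :=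
  ⟨permP12, memP12, Or.inr ⟨h1, h2⟩⟩

lemma caseA3 {v : ℝ×ℝ×ℝ} (h1 : -2 ≤ v.2.2) (h2 : v.2.2 ≤ 2) : Goal v :=
  ⟨permP12 * permP23, mul_mem memP12 memP23, Or.inr ⟨h1, h2⟩⟩



lemma two_z_pos {x y z : ℝ} (hx : 2 < x) (hy : 2 < y) (hz : 2 < z) (hxz : x ≤ z) (hyz : y ≤ z)
    (hk : 4 < x^2 + y^2 + z^2 - x*y*z) : 0 < 2*z - x*y := by
  by_contra h
  push_neg at h
  have h1 : 0 ≤ (z - y) * (x*y - z - y) := mul_nonneg (by linarith) (by linarith)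
  have h2 : 0 ≤ (z - x) * (x*y - z - x) := mul_nonneg (by linarith) (by linarith)
  have hfy : 4 < (x - 2) * (x + 2 - y^2) := by nlinarith
  have hfx : 4 < (y - 2) * (y + 2 - x^2) := by nlinarith
  have hy2 : y^2 < x + 2 := by nlinarith
  have hx2 : x^2 < y + 2 := by nlinarith
  nlinarith

lemma drop_ge {ε x y z : ℝ} (hε : 0 < ε) (hx : 2 < x) (hy : 2 < y) (hz : 2 < z)
    (hxz : x ≤ z) (hyz : y ≤ z) (hk : x^2 + y^2 + z^2 - x*y*z - 2 = 2 + ε) :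
    2 * Real.sqrt ε ≤ 2*z - x*y := by
  have hk4 : 4 < x^2 + y^2 + z^2 - x*y*z := by linarith
  have hd : 0 < 2*z - x*y := two_z_pos hx hy hz hxz hyz hk4
  have hid : (2*z - x*y)^2 = 4*ε + (x^2-4)*(y^2-4) := by nlinarith [hk]
  have h4e : 4*ε ≤ (2*z - x*y)^2 := by nlinarith [sq_nonneg (x^2-4), mul_nonneg (by nlinarith : (0:ℝ) ≤ x^2-4) (by nlinarith : (0:ℝ) ≤ y^2-4)]
  calc 2 * Real.sqrt ε = Real.sqrt (4*ε) := by
        rw [show (4:ℝ)*ε = 2^2 * ε by ring, Real.sqrt_mul (by positivity), Real.sqrt_sq (by norm_num)]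
    _ ≤ Real.sqrt ((2*z - x*y)^2) := Real.sqrt_le_sqrt h4e
    _ = 2*z - x*y := Real.sqrt_sq hd.le

/-- Descent step from a sorted all-positive triple. -/
lemma descentStep {ε x y z : ℝ} (hε : 0 < ε)
    (hx : 2 < x) (hy : 2 < y) (hz : 2 < z) (hxz : x ≤ z) (hyz : y ≤ z)
    (hκ : kappaFun (x,y,z) = 2 + ε) :
    Goal (x,y,z) ∨
      (2 < x*y - z ∧ kappaFun (x,y,x*y-z) = 2 + ε ∧
        x + y + (x*y - z) ≤ x + y + z - 2*Real.sqrt ε) := by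
  have hk' : x^2 + y^2 + z^2 - x*y*z - 2 = 2 + ε := hκ
  set w := x*y - z with hw
  rcases lt_or_ge w (-2) with hw1 | hw1
  · -- w < -2 : flip first two coords of (x,y,w), all ≤ -2
    left
    refine pull memQ ?_
    have hQ : permQ (x,y,z) = (x, y, w) := rfl
    rw [hQ]
    refine ⟨permSigma1 * permSigma2, mul_mem memS1 memS2, Or.inl ?_⟩
    have : (permSigma1 * permSigma2) (x, y, w) = (-x, -y, w) := by
      simp [Equiv.Perm.mul_apply, S2_apply, S1_apply]
    rw [this]
    exact ⟨by simpa using by linarith, by simpa using by linarith, by simpa using hw1.le⟩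
  · rcases le_or_gt w 2 with hw2 | hw2
    · -- -2 ≤ w ≤ 2
      left
      refine pull memQ ?_
      have hQ : permQ (x,y,z) = (x, y, w) := rfl
      rw [hQ]
      exact caseA3 hw1 hw2
    · right
      refine ⟨hw2, ?_, ?_⟩
      · show x^2 + y^2 + (x*y-z)^2 - x*y*(x*y-z) - 2 = 2 + ε
        nlinarith [hk']
      · have := drop_ge hε hx hy hz hxz hyz hk'
        have hwz : w = x*y - z := rfl
        linarith



lemma absS {x y z : ℝ} (hx : 2 < x) (hy : 2 < y) (hz : 2 < z) :
    |x| + |y| + |z| = x + y + z := by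
  rw [abs_of_pos (by linarith), abs_of_pos (by linarith), abs_of_pos (by linarith)]

/-- Handle an all-positive point, given the inductive hypothesis. -/
lemma posCase {ε : ℝ} (hε : 0 < ε) (n : ℕ)
    (IH : ∀ v : ℝ×ℝ×ℝ, kappaFun v = 2 + ε →
      |v.1| + |v.2.1| + |v.2.2| ≤ 6 + 2*Real.sqrt ε * n → Goal v)
    {x y z : ℝ} (hκ : kappaFun (x,y,z) = 2 + ε)
    (hx : 2 < x) (hy : 2 < y) (hz : 2 < z)
    (hS : x + y + z ≤ 6 + 2*Real.sqrt ε * (n+1)) : Goal (x,y,z) := by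
  -- helper: sorted case
  have sorted : ∀ a b c : ℝ, 2 < a → 2 < b → 2 < c → a ≤ c → b ≤ c →
      kappaFun (a,b,c) = 2 + ε → a + b + c ≤ 6 + 2*Real.sqrt ε * (n+1) →
      Goal (a,b,c) := by
    intro a b c ha hb hc hac hbc hk hs
    rcases descentStep hε ha hb hc hac hbc hk with hG | ⟨hw2, hkw, hsw⟩
    · exact hG
    · refine pull memQ ?_
      have hQ : permQ (a,b,c) = (a, b, a*b - c) := rfl
      rw [hQ]
      refine IH _ hkw ?_
      have habs : |a| + |b| + |a*b - c| = a + b + (a*b - c) := absS ha hb hw2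
      show |a| + |b| + |a*b-c| ≤ 6 + 2*Real.sqrt ε * n
      rw [habs]
      have : (n:ℝ) + 1 = ((n+1 : ℕ) : ℝ) := by push_cast; ring
      nlinarith [hsw, hs]
  rcases le_total x y with hxy | hxy
  · rcases le_total y z with hyz | hyz
    · exact sorted x y z hx hy hz (hxy.trans hyz) hyz hκ hS
    · -- max is y; apply p23 : (x,z,y)
      refine pull memP23 ?_
      have h : permP23 (x,y,z) = (x,z,y) := rfl
      rw [h]
      refine sorted x z y hx hz hy (hxy.trans ?_) hyz ?_ (by linarith)
      · exact le_refl y |>.trans (le_refl y)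
      · show x^2 + z^2 + y^2 - x*z*y - 2 = 2 + ε
        have : x^2 + y^2 + z^2 - x*y*z - 2 = 2 + ε := hκ
        linarith [this]
  · rcases le_total x z with hxz | hxz
    · exact sorted x y z hx hy hz hxz (hxy.trans hxz) hκ hS
    · -- max is x; apply p23*p12 : (y,z,x)
      refine pull (mul_mem memP23 memP12) ?_
      have h : (permP23 * permP12) (x,y,z) = (y,z,x) := rfl
      rw [h]
      refine sorted y z x hy hz hx (hxy.trans ?_) hxz ?_ (by linarith)
      · exact le_refl x |>.trans (le_refl x)
      · show y^2 + z^2 + x^2 - y*z*x - 2 = 2 + ε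
        have : x^2 + y^2 + z^2 - x*y*z - 2 = 2 + ε := hκ
        linarith [this]



lemma main {ε : ℝ} (hε : 0 < ε) (n : ℕ) :
    ∀ v : ℝ×ℝ×ℝ, kappaFun v = 2 + ε →
      |v.1| + |v.2.1| + |v.2.2| ≤ 6 + 2*Real.sqrt ε * n → Goal v := by
  induction n with
  | zero =>
    rintro ⟨x, y, z⟩ hκ hS
    simp only at hS
    by_cases h1 : |x| ≤ 2
    · obtain ⟨a, b⟩ := abs_le.1 h1; exact caseA1 a b
    by_cases h2 : |y| ≤ 2
    · obtain ⟨a, b⟩ := abs_le.1 h2; exact caseA2 (v := (x,y,z)) a b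
    by_cases h3 : |z| ≤ 2
    · obtain ⟨a, b⟩ := abs_le.1 h3; exact caseA3 (v := (x,y,z)) a b
    · push_neg at h1 h2 h3
      exfalso
      have : (6:ℝ) < |x| + |y| + |z| := by linarith
      simp only [Nat.cast_zero, mul_zero] at hS
      linarith
  | succ n IH =>
    rintro ⟨x, y, z⟩ hκ hS
    by_cases h1 : |x| ≤ 2
    · obtain ⟨a, b⟩ := abs_le.1 h1; exact caseA1 a b
    by_cases h2 : |y| ≤ 2
    · obtain ⟨a, b⟩ := abs_le.1 h2; exact caseA2 (v := (x,y,z)) a b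
    by_cases h3 : |z| ≤ 2
    · obtain ⟨a, b⟩ := abs_le.1 h3; exact caseA3 (v := (x,y,z)) a b
    push_neg at h1 h2 h3
    simp only at hS
    have hSn : |x| + |y| + |z| ≤ 6 + 2*Real.sqrt ε * (n+1) := by
      push_cast at hS ⊢; linarith
    rcases lt_abs.1 h1 with px | nx <;> rcases lt_abs.1 h2 with py | ny <;>
      rcases lt_abs.1 h3 with pz | nz
    -- (+,+,+)
    · refine posCase hε n IH hκ px py pz ?_
      rw [← absS px py pz]; exact hSn
    -- (+,+,-) : z < -2, flip coords 1,2 -> all negative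
    · have hz : z < -2 := by linarith
      refine ⟨permSigma1 * permSigma2, mul_mem memS1 memS2, Or.inl ?_⟩
      have h : (permSigma1 * permSigma2) (x,y,z) = (-x,-y,z) := by
        simp [Equiv.Perm.mul_apply, S2_apply, S1_apply]
      rw [h]
      exact ⟨show -x ≤ -2 by linarith, show -y ≤ -2 by linarith, show z ≤ -2 from hz.le⟩
    -- (+,-,+) : y < -2, flip coords 1,3 -> all negative (σ₂)
    · have hy : y < -2 := by linarith
      refine ⟨permSigma2, memS2, Or.inl ?_⟩
      rw [S2_apply]
      exact ⟨by simpa using by linarith, by simpa using hy.le, by simpa using by linarith⟩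
    -- (+,-,-) : flip coords 2,3 (σ₁) -> all positive
    · have hy : y < -2 := by linarith
      have hz : z < -2 := by linarith
      refine pull memS1 ?_
      rw [S1_apply]
      refine posCase hε n IH ?_ px (by simpa using by linarith) (by simpa using by linarith) ?_
      · show x^2 + (-y)^2 + (-z)^2 - x*(-y)*(-z) - 2 = 2 + ε
        have : x^2 + y^2 + z^2 - x*y*z - 2 = 2 + ε := hκ
        nlinarith [this]
      · have : x + -y + -z = |x| + |y| + |z| := by
          rw [abs_of_pos (by linarith), abs_of_neg (show y < 0 by linarith), abs_of_neg (show z < 0 by linarith)]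
        linarith [hSn]
    -- (-,+,+) : x < -2, flip coords 2,3 -> all negative (σ₁)
    · have hx : x < -2 := by linarith
      refine ⟨permSigma1, memS1, Or.inl ?_⟩
      rw [S1_apply]
      exact ⟨by simpa using hx.le, by simpa using by linarith, by simpa using by linarith⟩
    -- (-,+,-) : flip coords 1,3 (σ₂) -> all positive
    · have hx : x < -2 := by linarith
      have hz : z < -2 := by linarith
      refine pull memS2 ?_
      rw [S2_apply]
      refine posCase hε n IH ?_ (by simpa using by linarith) py (by simpa using by linarith) ?_
      · show (-x)^2 + y^2 + (-z)^2 - (-x)*y*(-z) - 2 = 2 + ε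
        have : x^2 + y^2 + z^2 - x*y*z - 2 = 2 + ε := hκ
        nlinarith [this]
      · have : -x + y + -z = |x| + |y| + |z| := by
          rw [abs_of_neg (show x < 0 by linarith), abs_of_pos (by linarith), abs_of_neg (show z < 0 by linarith)]
        linarith [hSn]
    -- (-,-,+) : flip coords 1,2 -> all positive
    · have hx : x < -2 := by linarith
      have hy : y < -2 := by linarith
      refine pull (mul_mem memS1 memS2) ?_
      have h : (permSigma1 * permSigma2) (x,y,z) = (-x,-y,z) := by
        simp [Equiv.Perm.mul_apply, S2_apply, S1_apply]
      rw [h]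
      refine posCase hε n IH ?_ (by simpa using by linarith) (by simpa using by linarith) pz ?_
      · show (-x)^2 + (-y)^2 + z^2 - (-x)*(-y)*z - 2 = 2 + ε
        have : x^2 + y^2 + z^2 - x*y*z - 2 = 2 + ε := hκ
        nlinarith [this]
      · have : -x + -y + z = |x| + |y| + |z| := by
          rw [abs_of_neg (show x < 0 by linarith), abs_of_neg (show y < 0 by linarith), abs_of_pos (by linarith)]
        linarith [hSn]
    -- (-,-,-) : done
    · exact ⟨1, one_mem _, Or.inl ⟨by simpa using by linarith, by simpa using by linarith,
        by simpa using by linarith⟩⟩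


end GammaRed

/-- Trace-reduction theorem: any `u ∈ ℝ³` with `κ(u) > 2` is `Γ₀`-equivalent to
a point `(x̃,ỹ,z̃)` with either all coordinates `≤ −2`, or `x̃ ∈ [−2,2]`. -/


theorem gamma_orbit_normal_form
    (u : ℝ × ℝ × ℝ) (hu : 2 < kappaFun u) :
    ∃ γ ∈ Gamma0,
      ((γ u).1 ≤ -2 ∧ (γ u).2.1 ≤ -2 ∧ (γ u).2.2 ≤ -2) ∨
      (-2 ≤ (γ u).1 ∧ (γ u).1 ≤ 2) := by
  set ε := kappaFun u - 2 with hεdef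
  have hε : 0 < ε := by simp [hεdef]; linarith
  have hsq : 0 < 2 * Real.sqrt ε := by positivity
  obtain ⟨n, hn⟩ := exists_nat_ge ((|u.1| + |u.2.1| + |u.2.2| - 6) / (2 * Real.sqrt ε))
  have hb : |u.1| + |u.2.1| + |u.2.2| ≤ 6 + 2 * Real.sqrt ε * n := by
    have := (div_le_iff₀ hsq).1 hn
    linarith
  obtain ⟨γ, hγ, hG⟩ := GammaRed.main hε n u (by rw [hεdef]; ring) hb
  exact ⟨γ, hγ, hG⟩
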